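/- arXiv:2511.00820 — 4 statements merged into one kernel-verified Lean document; each statement's English description precedes it below -/
import Mathlib

section
/- Suppose the regularizer R is convex and that all primal, leave-one-out primal, and dual solutions of the quantile regression exist and satisfy strong duality. Then for every index i, every dual solution η̂ of the full program and every leave-one-out primal solution ŵ^(−i) satisfy: if Ỹ_i < X̃_iᵀ ŵ^(−i) then η̂_i ≤ 0, and if Ỹ_i > X̃_iᵀ ŵ^(−i) then η̂_i ≥ 0. -/
open MeasureTheory ProbabilityTheory Filter Finset

noncomputable section

/-- The pinball (quantile) loss `ℓ_τ(r) = τ·r − min{r, 0}`. -/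
def pinball (τ r : ℝ) : ℝ := τ * r - min r 0

/-- The quantile-regression objective restricted to the samples in `S`:
`∑_{i ∈ S} ℓ_τ(Ỹ_i − X̃_iᵀ w) + R(w)`. -/
def primalObjS {n p : ℕ} (τ : ℝ) (X : Fin n → Fin p → ℝ) (Y : Fin n → ℝ)
    (R : (Fin p → ℝ) → ℝ) (S : Finset (Fin n)) (w : Fin p → ℝ) : ℝ :=
  ∑ i ∈ S, pinball τ (Y i - ∑ j, X i j * w j) + R w

/-- A primal solution of the quantile regression program over the samples in `S`. -/
def IsPrimalSolS {n p : ℕ} (τ : ℝ) (X : Fin n → Fin p → ℝ) (Y : Fin n → ℝ)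
    (R : (Fin p → ℝ) → ℝ) (S : Finset (Fin n)) (w : Fin p → ℝ) : Prop :=
  ∀ w', primalObjS τ X Y R S w ≤ primalObjS τ X Y R S w'

/-- The Lagrangian `L(w, r, η) = ∑_{i∈S} ℓ_τ(r_i) + ∑_{i∈S} η_i (Ỹ_i − X̃_iᵀw − r_i) + R(w)`
of the quantile regression over the samples in `S`. -/
def LagrS {n p : ℕ} (τ : ℝ) (X : Fin n → Fin p → ℝ) (Y : Fin n → ℝ)
    (R : (Fin p → ℝ) → ℝ) (S : Finset (Fin n)) (w : Fin p → ℝ) (r η : Fin n → ℝ) : ℝ :=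
  ∑ i ∈ S, pinball τ (r i) + ∑ i ∈ S, η i * (Y i - (∑ j, X i j * w j) - r i) + R w

/-- `((w, r), η)` is a saddle point of the Lagrangian over the samples in `S`.  By strong duality
this captures exactly the primal-dual optimal pairs. -/
def IsSaddleS {n p : ℕ} (τ : ℝ) (X : Fin n → Fin p → ℝ) (Y : Fin n → ℝ)
    (R : (Fin p → ℝ) → ℝ) (S : Finset (Fin n)) (w : Fin p → ℝ) (r η : Fin n → ℝ) : Prop :=
  (∀ w' r', LagrS τ X Y R S w r η ≤ LagrS τ X Y R S w' r' η) ∧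
  (∀ η', LagrS τ X Y R S w r η' ≤ LagrS τ X Y R S w r η)

/-- A dual solution of the quantile regression over the samples in `S`: the dual component of a
saddle point of the Lagrangian. -/
def IsDualSolS {n p : ℕ} (τ : ℝ) (X : Fin n → Fin p → ℝ) (Y : Fin n → ℝ)
    (R : (Fin p → ℝ) → ℝ) (S : Finset (Fin n)) (η : Fin n → ℝ) : Prop :=
  ∃ w r, IsSaddleS τ X Y R S w r η

/-- Proposition 1 of the paper.  If the regularizer `R` is convex and all
primal, leave-one-out primal, and dual solutions exist and satisfy strong duality (i.e. saddle
points of the Lagrangian of the full and of every leave-one-out program exist), then for every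
index `i`, every dual solution `η̂` of the full program and every leave-one-out primal solution
`ŵ^{(-i)}` satisfy: `Ỹ_i < X̃_iᵀ ŵ^{(-i)} → η̂_i ≤ 0` and `Ỹ_i > X̃_iᵀ ŵ^{(-i)} → η̂_i ≥ 0`. -/
theorem dual_sign_vs_loo_residual
    {n p : ℕ} (τ : ℝ) (hτ : τ ∈ Set.Ioo (0 : ℝ) 1)
    (X : Fin n → Fin p → ℝ) (Y : Fin n → ℝ) (R : (Fin p → ℝ) → ℝ)
    (hR : ConvexOn ℝ Set.univ R)
    (hprimal : ∃ w, IsPrimalSolS τ X Y R Finset.univ w)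
    (hsaddle : ∃ w r η, IsSaddleS τ X Y R Finset.univ w r η)
    (hloo_primal : ∀ i : Fin n, ∃ w, IsPrimalSolS τ X Y R (Finset.univ.erase i) w)
    (hloo_saddle : ∀ i : Fin n, ∃ w r η, IsSaddleS τ X Y R (Finset.univ.erase i) w r η)
    (i : Fin n) (η : Fin n → ℝ) (hη : IsDualSolS τ X Y R Finset.univ η)
    (w : Fin p → ℝ) (hw : IsPrimalSolS τ X Y R (Finset.univ.erase i) w) :
    (Y i < ∑ j, X i j * w j → η i ≤ 0) ∧
    (∑ j, X i j * w j < Y i → 0 ≤ η i) := by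
  obtain ⟨hτ0, hτ1⟩ := hτ
  obtain ⟨w₀, r₀, hs1, hs2⟩ := hη
  -- pinball is nonnegative
  have hpb : ∀ r : ℝ, 0 ≤ pinball τ r := by
    intro r
    unfold pinball
    rcases le_or_gt r 0 with h | h
    · rw [min_eq_left h]; nlinarith
    · rw [min_eq_right h.le]; nlinarith
  -- complementary slackness: r₀ equals the residuals of w₀
  have hc : ∀ j : Fin n, Y j - (∑ k, X j k * w₀ k) - r₀ j = 0 := by
    intro j
    set c : ℝ := Y j - (∑ k, X j k * w₀ k) - r₀ j with hcdef
    have key : ∀ t : ℝ, t * c ≤ 0 := by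
      intro t
      have h := hs2 (fun k => if k = j then η k + t else η k)
      unfold LagrS at h
      have hsum : ∑ k : Fin n, (if k = j then η k + t else η k) *
          (Y k - (∑ l, X k l * w₀ l) - r₀ k)
          = (∑ k : Fin n, η k * (Y k - (∑ l, X k l * w₀ l) - r₀ k)) + t * c := by
        have h1 : ∀ k : Fin n, (if k = j then η k + t else η k) *
            (Y k - (∑ l, X k l * w₀ l) - r₀ k)
            = η k * (Y k - (∑ l, X k l * w₀ l) - r₀ k)
              + (if k = j then t * c else 0) := by
          intro k
          by_cases hk : k = j
          · subst hk; simp [hcdef]; ring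
          · simp [hk]
        rw [Finset.sum_congr rfl (fun k _ => h1 k), Finset.sum_add_distrib,
          Finset.sum_ite_eq' Finset.univ j (fun _ => t * c)]
        simp
      rw [hsum] at h
      linarith
    have h1 := key 1
    have h2 := key (-1)
    linarith
  -- value of the Lagrangian at the saddle equals the full primal objective
  have hLval : LagrS τ X Y R Finset.univ w₀ r₀ η = primalObjS τ X Y R Finset.univ w₀ := by
    unfold LagrS primalObjS
    have h0 : ∑ k : Fin n, η k * (Y k - (∑ l, X k l * w₀ l) - r₀ k) = 0 :=
      Finset.sum_eq_zero fun k _ => by rw [hc k]; ring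
    have hr : ∀ k : Fin n, r₀ k = Y k - ∑ l, X k l * w₀ l := fun k => by
      have := hc k; linarith
    rw [h0, Finset.sum_congr rfl (fun k _ => by rw [hr k])]
    ring
  -- notation
  set a : ℝ := Y i - ∑ j, X i j * w j with hadef
  -- upper bound: test the saddle inequality with w and modified residuals
  have hub : primalObjS τ X Y R Finset.univ w₀
      ≤ primalObjS τ X Y R (Finset.univ.erase i) w + η i * a := by
    have h := hs1 w (fun j => if j = i then 0 else Y j - ∑ k, X j k * w k)
    rw [hLval] at h
    refine le_trans h (le_of_eq ?_)
    unfold LagrS primalObjS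
    have hA : ∑ j : Fin n, pinball τ (if j = i then 0 else Y j - ∑ k, X j k * w k)
        = ∑ j ∈ Finset.univ.erase i, pinball τ (Y j - ∑ k, X j k * w k) := by
      rw [← Finset.sum_erase_add Finset.univ _ (Finset.mem_univ i)]
      have : pinball τ (if i = i then 0 else Y i - ∑ k, X i k * w k) = 0 := by
        simp [pinball]
      rw [this, add_zero]
      exact Finset.sum_congr rfl fun j hj => by
        rw [if_neg (Finset.ne_of_mem_erase hj)]
    have hB : ∑ j : Fin n, η j * (Y j - (∑ k, X j k * w k) -
        (if j = i then 0 else Y j - ∑ k, X j k * w k)) = η i * a := by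
      rw [Finset.sum_eq_single i]
      · simp [hadef]
      · intro j _ hj
        rw [if_neg hj]; ring
      · intro h; exact absurd (Finset.mem_univ i) h
    rw [hA, hB]; ring
  -- lower bound: drop the nonnegative i-th pinball term and use LOO optimality
  have hlb : primalObjS τ X Y R (Finset.univ.erase i) w
      ≤ primalObjS τ X Y R Finset.univ w₀ := by
    refine le_trans (hw w₀) ?_
    unfold primalObjS
    rw [← Finset.sum_erase_add Finset.univ _ (Finset.mem_univ i)]
    have := hpb (Y i - ∑ j, X i j * w₀ j)
    linarith
  have hkey : 0 ≤ η i * a := by linarith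
  constructor
  · intro h
    have ha : a < 0 := by rw [hadef]; linarith
    nlinarith
  · intro h
    have ha : 0 < a := by rw [hadef]; linarith
    nlinarith

end
end

section
/- Fix any index i ∈ {1,…,n}. If there exists a leave-one-out primal solution ŵ^(−i) with Ỹ_i = X̃_iᵀ ŵ^(−i), then there exists a dual solution η̂ of the full program with η̂_i = 0. Conversely, if there exists a dual solution of the full program with η̂_i = 0, then there exists a leave-one-out primal solution ŵ^(−i) with Ỹ_i = X̃_iᵀ ŵ^(−i). -/
open MeasureTheory ProbabilityTheory Filter Finset

noncomputable section

-- auxiliary lemmas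

lemma pinball_nonneg {τ : ℝ} (hτ : τ ∈ Set.Ioo (0 : ℝ) 1) (r : ℝ) : 0 ≤ pinball τ r := by
  unfold pinball
  rcases le_or_gt 0 r with h | h
  · rw [min_eq_right h]; nlinarith [hτ.1]
  · rw [min_eq_left h.le]; nlinarith [hτ.2]

lemma pinball_zero (τ : ℝ) : pinball τ 0 = 0 := by simp [pinball]

lemma pinball_eq_zero {τ : ℝ} (hτ : τ ∈ Set.Ioo (0 : ℝ) 1) {r : ℝ}
    (h : pinball τ r = 0) : r = 0 := by
  unfold pinball at h
  rcases le_or_gt 0 r with h0 | h0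
  · rw [min_eq_right h0] at h
    nlinarith [hτ.1]
  · exfalso
    rw [min_eq_left h0.le] at h
    nlinarith [hτ.2]

section Lemmas
variable {n p : ℕ} (τ : ℝ) (X : Fin n → Fin p → ℝ) (Y : Fin n → ℝ) (R : (Fin p → ℝ) → ℝ)

lemma lagr_eq_obj {S : Finset (Fin n)} {w : Fin p → ℝ} {r η : Fin n → ℝ}
    (h : ∀ k ∈ S, Y k - (∑ j, X k j * w j) - r k = 0) :
    LagrS τ X Y R S w r η = primalObjS τ X Y R S w := by
  unfold LagrS primalObjS
  have h2 : ∑ k ∈ S, η k * (Y k - (∑ j, X k j * w j) - r k) = 0 :=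
    Finset.sum_eq_zero fun k hk => by rw [h k hk, mul_zero]
  have h3 : ∑ k ∈ S, pinball τ (r k) = ∑ k ∈ S, pinball τ (Y k - ∑ j, X k j * w j) :=
    Finset.sum_congr rfl fun k hk => by have := h k hk; congr 1; linarith
  rw [h2, add_zero, h3]

lemma lagr_congr_eta {S : Finset (Fin n)} {w : Fin p → ℝ} {r η η' : Fin n → ℝ}
    (h : ∀ k ∈ S, η k = η' k) :
    LagrS τ X Y R S w r η = LagrS τ X Y R S w r η' := by
  unfold LagrS
  have h2 : ∑ k ∈ S, η k * (Y k - (∑ j, X k j * w j) - r k)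
      = ∑ k ∈ S, η' k * (Y k - (∑ j, X k j * w j) - r k) :=
    Finset.sum_congr rfl fun k hk => by rw [h k hk]
  rw [h2]

lemma lagr_congr_r {S : Finset (Fin n)} {w : Fin p → ℝ} {r r' η : Fin n → ℝ}
    (h : ∀ k ∈ S, r k = r' k) :
    LagrS τ X Y R S w r η = LagrS τ X Y R S w r' η := by
  unfold LagrS
  have h1 : ∑ k ∈ S, pinball τ (r k) = ∑ k ∈ S, pinball τ (r' k) :=
    Finset.sum_congr rfl fun k hk => by rw [h k hk]
  have h2 : ∑ k ∈ S, η k * (Y k - (∑ j, X k j * w j) - r k)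
      = ∑ k ∈ S, η k * (Y k - (∑ j, X k j * w j) - r' k) :=
    Finset.sum_congr rfl fun k hk => by rw [h k hk]
  rw [h1, h2]

lemma saddle_resid {S : Finset (Fin n)} {w : Fin p → ℝ} {r η : Fin n → ℝ}
    (hs : IsSaddleS τ X Y R S w r η) :
    ∀ j ∈ S, Y j - (∑ j', X j j' * w j') - r j = 0 := by
  intro j hj
  set c := Y j - (∑ j', X j j' * w j') - r j with hc
  by_contra hne
  have h2 := hs.2 (Function.update η j (η j + c))
  unfold LagrS at h2
  have key : ∑ k ∈ S, (Function.update η j (η j + c) k - η k) *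
      (Y k - (∑ j', X k j' * w j') - r k) = c * c := by
    rw [Finset.sum_eq_single j]
    · rw [Function.update_self, ← hc]; ring
    · intro k _ hkj; rw [Function.update_of_ne hkj]; ring
    · intro h; exact absurd hj h
  have split : ∑ k ∈ S, (Function.update η j (η j + c) k - η k) *
      (Y k - (∑ j', X k j' * w j') - r k)
      = ∑ k ∈ S, Function.update η j (η j + c) k * (Y k - (∑ j', X k j' * w j') - r k)
        - ∑ k ∈ S, η k * (Y k - (∑ j', X k j' * w j') - r k) := by
    rw [← Finset.sum_sub_distrib]
    exact Finset.sum_congr rfl fun k _ => by ring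
  have : 0 < c * c := mul_self_pos.mpr hne
  rw [split] at key
  linarith

lemma saddle_primal {S : Finset (Fin n)} {w : Fin p → ℝ} {r η : Fin n → ℝ}
    (hs : IsSaddleS τ X Y R S w r η) : IsPrimalSolS τ X Y R S w := by
  intro w'
  have hres := saddle_resid τ X Y R hs
  have h1 := hs.1 w' (fun k => Y k - ∑ j, X k j * w' j)
  rw [lagr_eq_obj τ X Y R hres, lagr_eq_obj τ X Y R (fun k _ => sub_self _)] at h1
  exact h1

lemma obj_split (i : Fin n) (w : Fin p → ℝ) :
    primalObjS τ X Y R Finset.univ w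
      = primalObjS τ X Y R (Finset.univ.erase i) w + pinball τ (Y i - ∑ j, X i j * w j) := by
  unfold primalObjS
  rw [← Finset.sum_erase_add Finset.univ _ (Finset.mem_univ i)]
  ring

lemma lagr_split (i : Fin n) (w : Fin p → ℝ) (r η : Fin n → ℝ) (hηi : η i = 0) :
    LagrS τ X Y R Finset.univ w r η
      = LagrS τ X Y R (Finset.univ.erase i) w r η + pinball τ (r i) := by
  unfold LagrS
  rw [← Finset.sum_erase_add Finset.univ (fun k => pinball τ (r k)) (Finset.mem_univ i),
    ← Finset.sum_erase_add Finset.univ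
      (fun k => η k * (Y k - (∑ j, X k j * w j) - r k)) (Finset.mem_univ i), hηi]
  ring

end Lemmas

/-- Lemma `dual_at_0_to_interpolation` of the paper.  Fix an index `i`.  If there
exists a leave-one-out primal solution `ŵ^{(-i)}` that interpolates the `i`-th point, i.e.
`Ỹ_i = X̃_iᵀ ŵ^{(-i)}`, then there exists a dual solution of the full program with `η̂_i = 0`;
conversely, if there exists a dual solution of the full program with `η̂_i = 0`, then there exists
a leave-one-out primal solution with `Ỹ_i = X̃_iᵀ ŵ^{(-i)}`. -/
theorem dual_at_zero_iff_loo_interpolation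
    {n p : ℕ} (τ : ℝ) (hτ : τ ∈ Set.Ioo (0 : ℝ) 1)
    (X : Fin n → Fin p → ℝ) (Y : Fin n → ℝ) (R : (Fin p → ℝ) → ℝ)
    (hR : ConvexOn ℝ Set.univ R)
    (hprimal : ∃ w, IsPrimalSolS τ X Y R Finset.univ w)
    (hsaddle : ∃ w r η, IsSaddleS τ X Y R Finset.univ w r η)
    (hloo_primal : ∀ i : Fin n, ∃ w, IsPrimalSolS τ X Y R (Finset.univ.erase i) w)
    (hloo_saddle : ∀ i : Fin n, ∃ w r η, IsSaddleS τ X Y R (Finset.univ.erase i) w r η)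
    (i : Fin n) :
    ((∃ w, IsPrimalSolS τ X Y R (Finset.univ.erase i) w ∧ Y i = ∑ j, X i j * w j)
      ↔ (∃ η, IsDualSolS τ X Y R Finset.univ η ∧ η i = 0)) := by
  constructor
  · rintro ⟨wB, hwB, hint⟩
    obtain ⟨w₀, r₀, η₀, hs₀⟩ := hloo_saddle i
    have hres₀ := saddle_resid τ X Y R hs₀
    have hw₀ := saddle_primal τ X Y R hs₀
    have hval : primalObjS τ X Y R (Finset.univ.erase i) wB
        = primalObjS τ X Y R (Finset.univ.erase i) w₀ := le_antisymm (hwB w₀) (hw₀ wB)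
    set rB : Fin n → ℝ := fun k => Y k - ∑ j, X k j * wB j with hrB
    set etaB : Fin n → ℝ := Function.update η₀ i 0 with hetaB
    have hreswB : ∀ k ∈ (Finset.univ : Finset (Fin n)),
        Y k - (∑ j, X k j * wB j) - rB k = 0 := fun k _ => sub_self _
    have hetaBi : etaB i = 0 := Function.update_self i 0 η₀
    refine ⟨etaB, ⟨wB, rB, ?_, ?_⟩, hetaBi⟩
    · intro w' r'
      have lhs1 : LagrS τ X Y R Finset.univ wB rB etaB = primalObjS τ X Y R Finset.univ wB :=
        lagr_eq_obj τ X Y R hreswB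
      have lhs2 : primalObjS τ X Y R Finset.univ wB
          = primalObjS τ X Y R (Finset.univ.erase i) wB := by
        rw [obj_split τ X Y R i wB]
        have : Y i - ∑ j, X i j * wB j = 0 := by rw [hint]; ring
        rw [this, pinball_zero, add_zero]
      have lhs3 : primalObjS τ X Y R (Finset.univ.erase i) w₀
          = LagrS τ X Y R (Finset.univ.erase i) w₀ r₀ η₀ :=
        (lagr_eq_obj τ X Y R hres₀).symm
      have rhs1 : LagrS τ X Y R Finset.univ w' r' etaB
          = LagrS τ X Y R (Finset.univ.erase i) w' r' etaB + pinball τ (r' i) :=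
        lagr_split τ X Y R i w' r' etaB hetaBi
      have rhs2 : LagrS τ X Y R (Finset.univ.erase i) w' r' etaB
          = LagrS τ X Y R (Finset.univ.erase i) w' r' η₀ :=
        lagr_congr_eta τ X Y R fun k hk => by
          rw [hetaB, Function.update_of_ne (Finset.ne_of_mem_erase hk)]
      have hmin := hs₀.1 w' r'
      have hpb := pinball_nonneg hτ (r' i)
      rw [lhs1, lhs2, hval, lhs3, rhs1, rhs2]
      linarith
    · intro η'
      rw [lagr_eq_obj τ X Y R hreswB, lagr_eq_obj τ X Y R hreswB]
  · rintro ⟨etaB, ⟨w, r, hs⟩, hηi⟩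
    have hres := saddle_resid τ X Y R hs
    have hri : r i = 0 := by
      have h1 := hs.1 w (Function.update r i 0)
      rw [lagr_split τ X Y R i w r etaB hηi,
        lagr_split τ X Y R i w (Function.update r i 0) etaB hηi] at h1
      have heq : LagrS τ X Y R (Finset.univ.erase i) w (Function.update r i 0) etaB
          = LagrS τ X Y R (Finset.univ.erase i) w r etaB :=
        lagr_congr_r τ X Y R fun k hk =>
          Function.update_of_ne (Finset.ne_of_mem_erase hk) 0 r
      rw [heq, Function.update_self, pinball_zero] at h1
      have hpb := pinball_nonneg hτ (r i)
      exact pinball_eq_zero hτ (le_antisymm (by linarith) hpb)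
    have hYi : Y i = ∑ j, X i j * w j := by
      have := hres i (Finset.mem_univ i); rw [hri] at this; linarith
    refine ⟨w, ?_, hYi⟩
    intro w'
    set r' : Fin n → ℝ := Function.update (fun k => Y k - ∑ j, X k j * w' j) i 0 with hr'
    have h1 := hs.1 w' r'
    have e1 : LagrS τ X Y R Finset.univ w r etaB = primalObjS τ X Y R Finset.univ w :=
      lagr_eq_obj τ X Y R hres
    have e2 : primalObjS τ X Y R Finset.univ w
        = primalObjS τ X Y R (Finset.univ.erase i) w := by
      rw [obj_split τ X Y R i w]
      have : Y i - ∑ j, X i j * w j = 0 := by rw [hYi]; ring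
      rw [this, pinball_zero, add_zero]
    have e3 : LagrS τ X Y R Finset.univ w' r' etaB
        = LagrS τ X Y R (Finset.univ.erase i) w' r' etaB + pinball τ (r' i) :=
      lagr_split τ X Y R i w' r' etaB hηi
    have e4 : LagrS τ X Y R (Finset.univ.erase i) w' r' etaB
        = primalObjS τ X Y R (Finset.univ.erase i) w' :=
      lagr_eq_obj τ X Y R fun k hk => by
        rw [hr', Function.update_of_ne (Finset.ne_of_mem_erase hk)]
        ring
    have e5 : pinball τ (r' i) = 0 := by
      rw [hr', Function.update_self, pinball_zero]
    rw [e1, e2, e3, e4, e5] at h1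
    linarith


end
end

section
/- Assume the data {(X̃_i, Ỹ_i)}_{i=1}^n are i.i.d., the conditional distribution of Ỹ_i given X̃_i is continuous, R(w) = Σ_{j=1}^p λ_j w_j² with λ_j ≥ 0, each X̃_i = Z_i + ξ_i where ξ_i is independent of (Z_i, Ỹ_i) and has independent continuously distributed entries, and p < n. Then with probability one, every dual solution η̂ satisfies |{i : −(1−τ) < η̂_i < τ}| < n. -/
open MeasureTheory ProbabilityTheory Filter Finset

noncomputable section

attribute [local instance 10] Classical.propDecidable

/-! If every dual coordinate of a saddle point lies strictly inside `(-(1-τ), τ)`, complementary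
slackness forces the primal solution `w` to interpolate all the data, `Ỹ_i = X̃_iᵀ w`. As `p < n`,
some row `X̃_i` lies in the span of a linearly independent family of other rows, and then `Ỹ_i` is
the value at `X̃_i` of the minimum-norm interpolant of those rows: a measurable function of `X̃_i`
and of samples independent of `(X̃_i, Ỹ_i)`. Since `Ỹ_i` given `X̃_i` has no atoms, each of these
finitely many coincidences has probability zero. -/

open Matrix

lemma Finset.sum_apply_update {ι β M : Type*} [DecidableEq ι] [AddCommGroup M] {s : Finset ι}
    {i : ι} (hi : i ∈ s) (F : ι → β → M) (v : ι → β) (t : β) :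
    ∑ k ∈ s, F k (Function.update v i t k) = ∑ k ∈ s, F k (v k) + (F i t - F i (v i)) := by
  simp only [Function.apply_update F v i t, Finset.sum_update_of_mem hi,
    ← Finset.add_sum_erase s _ hi, Finset.sdiff_singleton_eq_erase]
  abel

section Saddle

variable {n p : ℕ} {τ : ℝ} {X : Fin n → Fin p → ℝ} {Y : Fin n → ℝ} {R : (Fin p → ℝ) → ℝ}
  {S : Finset (Fin n)} {w : Fin p → ℝ} {r η : Fin n → ℝ} {i : Fin n}

lemma LagrS_update_dual (hi : i ∈ S) (t : ℝ) :
    LagrS τ X Y R S w r (Function.update η i t) =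
      LagrS τ X Y R S w r η + (t - η i) * (Y i - X i ⬝ᵥ w - r i) := by
  have := Finset.sum_apply_update hi (fun k e => e * (Y k - X k ⬝ᵥ w - r k)) η t
  simp only [LagrS, dotProduct] at this ⊢
  rw [this]
  ring

lemma LagrS_update_residual (hi : i ∈ S) (t : ℝ) :
    LagrS τ X Y R S w (Function.update r i t) η =
      LagrS τ X Y R S w r η + (pinball τ t - pinball τ (r i)) - η i * (t - r i) := by
  have h₁ := Finset.sum_apply_update hi (fun _ e => pinball τ e) r t
  have h₂ := Finset.sum_apply_update hi (fun k e => η k * (Y k - X k ⬝ᵥ w - e)) r t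
  simp only [LagrS, dotProduct] at h₁ h₂ ⊢
  rw [h₁, h₂]
  ring

lemma IsSaddleS.residual_eq_zero (hs : IsSaddleS τ X Y R S w r η) (hi : i ∈ S) :
    Y i - X i ⬝ᵥ w - r i = 0 := by
  have h₁ := hs.2 (Function.update η i (η i + 1))
  have h₂ := hs.2 (Function.update η i (η i - 1))
  rw [LagrS_update_dual hi] at h₁ h₂
  linarith

lemma IsSaddleS.pinball_le_mul (hs : IsSaddleS τ X Y R S w r η) (hi : i ∈ S) :
    pinball τ (r i) ≤ η i * r i := by
  have h := hs.1 w (Function.update r i 0)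
  rw [LagrS_update_residual hi, show pinball τ 0 = 0 by simp [pinball]] at h
  linarith

lemma eq_zero_of_pinball_le_mul {τ t η : ℝ} (hη : -(1 - τ) < η ∧ η < τ)
    (h : pinball τ t ≤ η * t) : t = 0 := by
  unfold pinball at h
  rcases lt_trichotomy t 0 with ht | ht | ht
  · rw [min_eq_left ht.le] at h; nlinarith
  · exact ht
  · rw [min_eq_right ht.le] at h; nlinarith

lemma IsSaddleS.interpolates (hs : IsSaddleS τ X Y R S w r η) (hi : i ∈ S)
    (hη : -(1 - τ) < η i ∧ η i < τ) : Y i = X i ⬝ᵥ w := by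
  have := hs.residual_eq_zero hi
  rw [eq_zero_of_pinball_le_mul hη (hs.pinball_le_mul hi)] at this
  linarith

end Saddle

/-- The value at `x` of the minimum-norm solution `Aᵀ (A Aᵀ)⁻¹ y` of `A v = y`. -/
def minNormPredict {m κ : Type*} [Fintype m] [DecidableEq m] [Fintype κ] (A : Matrix m κ ℝ)
    (y : m → ℝ) (x : κ → ℝ) : ℝ :=
  y ⬝ᵥ ((A * Aᵀ)⁻¹ *ᵥ (A *ᵥ x))

lemma minNormPredict_eq_inv_det_mul {m κ : Type*} [Fintype m] [DecidableEq m] [Fintype κ]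
    (A : Matrix m κ ℝ) (y : m → ℝ) (x : κ → ℝ) :
    minNormPredict A y x = (A * Aᵀ).det⁻¹ * (y ⬝ᵥ ((A * Aᵀ).adjugate *ᵥ (A *ᵥ x))) := by
  rw [minNormPredict, Matrix.inv_def, Ring.inverse_eq_inv', smul_mulVec, dotProduct_smul,
    smul_eq_mul]

lemma Measurable.minNormPredict {α m κ : Type*} [MeasurableSpace α] [Fintype m] [DecidableEq m]
    [Fintype κ] {A : α → m → κ → ℝ} {y : α → m → ℝ} {x : α → κ → ℝ} (hA : Measurable A)
    (hy : Measurable y) (hx : Measurable x) :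
    Measurable fun a => minNormPredict (Matrix.of (A a)) (y a) (x a) := by
  have hG : Continuous fun B : m → κ → ℝ => Matrix.of B * (Matrix.of B)ᵀ :=
    continuous_id.matrix_mul continuous_id.matrix_transpose
  have hnum : Continuous fun q : (m → κ → ℝ) × (m → ℝ) × (κ → ℝ) =>
      q.2.1 ⬝ᵥ ((Matrix.of q.1 * (Matrix.of q.1)ᵀ).adjugate *ᵥ (Matrix.of q.1 *ᵥ q.2.2)) :=
    continuous_snd.fst.dotProduct ((hG.comp continuous_fst).matrix_adjugate.matrix_mulVec
      (continuous_fst.matrix_mulVec continuous_snd.snd))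
  simp only [minNormPredict_eq_inv_det_mul]
  exact ((hG.matrix_det.measurable.comp hA).inv).mul
    (hnum.measurable.comp (hA.prodMk (hy.prodMk hx)))

lemma minNormPredict_eq_dotProduct {m κ : Type*} [Fintype m] [DecidableEq m] [Fintype κ]
    {A : Matrix m κ ℝ} (hA : LinearIndependent ℝ A.row) {x : κ → ℝ}
    (hx : x ∈ Submodule.span ℝ (Set.range A.row)) (w : κ → ℝ) :
    minNormPredict A (A *ᵥ w) x = x ⬝ᵥ w := by
  obtain ⟨d, hd⟩ := (Submodule.mem_span_range_iff_exists_fun ℝ).mp hx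
  obtain rfl : x = d ᵥ* A := by rw [vecMul_eq_sum, ← hd]; rfl
  have hG : IsUnit (A * Aᵀ) := by
    rw [← conjTranspose_eq_transpose_of_trivial]
    exact (PosDef.mul_conjTranspose_self A (vecMul_injective_iff.mpr hA)).isUnit
  have hinv : (A * Aᵀ)⁻¹ *ᵥ (A *ᵥ (d ᵥ* A)) = d := by
    rw [← mulVec_transpose, mulVec_mulVec, mulVec_mulVec, Matrix.mul_assoc,
      nonsing_inv_mul _ ((isUnit_iff_isUnit_det _).mp hG), one_mulVec]
  rw [minNormPredict, hinv, dotProduct_comm, dotProduct_mulVec]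

lemma exists_notMem_linearIndependent_span {ι K V : Type*} [Fintype ι] [Field K]
    [AddCommGroup V] [Module K V] [FiniteDimensional K V] {a : ι → V}
    (h : Module.finrank K V < Fintype.card ι) :
    ∃ i, ∃ s : Finset ι, i ∉ s ∧ LinearIndependent K (fun k : s => a k) ∧
      a i ∈ Submodule.span K (Set.range fun k : s => a k) := by
  obtain ⟨b, -, -, hspan, hb⟩ :=
    exists_linearIndepOn_extension (linearIndepOn_empty K a) (Set.subset_univ _)
  obtain ⟨i, hi⟩ : ∃ i, i ∉ b := by
    by_contra! hall
    rw [Set.eq_univ_of_forall hall, linearIndepOn_univ_iff] at hb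
    exact h.not_ge hb.fintype_card_le_finrank
  rw [← (Set.toFinite b).coe_toFinset] at hb hspan hi
  refine ⟨i, _, hi, hb, ?_⟩
  rw [Set.image_eq_range a (_ : Finset ι)] at hspan
  exact hspan (Set.mem_image_of_mem a trivial)

lemma exists_notMem_dotProduct_eq_minNormPredict {ι κ : Type*} [Fintype ι] [DecidableEq ι]
    [Fintype κ] (h : Fintype.card κ < Fintype.card ι) (a : ι → κ → ℝ) (w : κ → ℝ) :
    ∃ i, ∃ s : Finset ι, i ∉ s ∧
      a i ⬝ᵥ w = minNormPredict (Matrix.of fun k : s => a k) (fun k : s => a k ⬝ᵥ w) (a i) := by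
  obtain ⟨i, s, hi, hind, hspan⟩ := exists_notMem_linearIndependent_span (K := ℝ) (a := a)
    (by rwa [Module.finrank_fintype_fun_eq_card])
  exact ⟨i, s, hi, (minNormPredict_eq_dotProduct hind hspan w).symm⟩

lemma measure_eq_comp_eq_zero_of_condDistrib {Ω α : Type*} [MeasurableSpace Ω]
    [MeasurableSpace α] {μ : Measure Ω} [IsFiniteMeasure μ] {A : Ω → α} {B : Ω → ℝ}
    (hA : Measurable A) (hB : Measurable B) (hc : ∀ᵐ x ∂(μ.map A), ∀ y, condDistrib B A μ x {y} = 0)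
    {f : α → ℝ} (hf : Measurable f) : μ {ω | B ω = f (A ω)} = 0 := by
  have hs : MeasurableSet {q : α × ℝ | q.2 = f q.1} :=
    measurableSet_eq_fun measurable_snd (hf.comp measurable_fst)
  calc μ {ω | B ω = f (A ω)} = (μ.map fun ω => (A ω, B ω)) {q | q.2 = f q.1} :=
        (Measure.map_apply (hA.prodMk hB) hs).symm
    _ = ∫⁻ x, condDistrib B A μ x {f x} ∂(μ.map A) := by
        rw [← compProd_map_condDistrib hB.aemeasurable, Measure.compProd_apply hs]
        rfl
    _ = 0 := (lintegral_congr_ae (hc.mono fun x hx => hx (f x))).trans lintegral_zero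

lemma measure_eq_comp_eq_zero_of_indepFun {Ω α F : Type*} [MeasurableSpace Ω]
    [MeasurableSpace α] [MeasurableSpace F] {μ : Measure Ω} [IsFiniteMeasure μ]
    {A : Ω → α} {B : Ω → ℝ} {W : Ω → F} (hA : Measurable A) (hB : Measurable B)
    (hW : Measurable W) (hind : IndepFun (fun ω => (A ω, B ω)) W μ)
    (hc : ∀ᵐ x ∂(μ.map A), ∀ y, condDistrib B A μ x {y} = 0)
    {h : α × F → ℝ} (hh : Measurable h) : μ {ω | B ω = h (A ω, W ω)} = 0 := by
  have hs : MeasurableSet {q : F × α × ℝ | q.2.2 = h (q.2.1, q.1)} :=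
    measurableSet_eq_fun (by fun_prop) (by fun_prop)
  have hslice (v : F) :
      (μ.map fun ω => (A ω, B ω)) (Prod.mk v ⁻¹' {q | q.2.2 = h (q.2.1, q.1)}) = 0 := by
    rw [Measure.map_apply (hA.prodMk hB) (measurableSet_preimage measurable_prodMk_left hs)]
    exact measure_eq_comp_eq_zero_of_condDistrib hA hB hc
      (hh.comp (measurable_id.prodMk measurable_const))
  calc μ {ω | B ω = h (A ω, W ω)}
      = (μ.map fun ω => (W ω, (A ω, B ω))) {q | q.2.2 = h (q.2.1, q.1)} :=
        (Measure.map_apply (hW.prodMk (hA.prodMk hB)) hs).symm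
    _ = 0 := by
        rw [(indepFun_iff_map_prod_eq_prod_map_map hW.aemeasurable (hA.prodMk hB).aemeasurable).mp
          hind.symm, Measure.prod_apply hs]
        simp only [hslice, lintegral_zero]

theorem interior_dual_coordinates_lt_n_general
    {Ω : Type*} [MeasurableSpace Ω] (μ : Measure Ω) [IsProbabilityMeasure μ]
    {n p : ℕ} (τ : ℝ)
    (X : Ω → Fin n → Fin p → ℝ) (Y : Ω → Fin n → ℝ)
    (hXmeas : Measurable X) (hYmeas : Measurable Y)
    (hindep : iIndepFun (fun i ω => (X ω i, Y ω i)) μ)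
    (hcond : ∀ i : Fin n, ∀ᵐ x ∂(μ.map fun ω => X ω i),
      ∀ y : ℝ, condDistrib (fun ω => Y ω i) (fun ω => X ω i) μ x {y} = 0)
    (R : (Fin p → ℝ) → ℝ)
    (hpn : p < n) :
    ∀ᵐ ω ∂μ, ∀ η, IsDualSolS τ (X ω) (Y ω) R Finset.univ η →
      Nat.card {i : Fin n // -(1 - τ) < η i ∧ η i < τ} < n := by
  have hX (k : Fin n) : Measurable fun ω => X ω k := (measurable_pi_apply k).comp hXmeas
  have hY (k : Fin n) : Measurable fun ω => Y ω k := (measurable_pi_apply k).comp hYmeas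
  have hV (k : Fin n) : Measurable fun ω => (X ω k, Y ω k) := (hX k).prodMk (hY k)
  have hnull : ∀ᵐ ω ∂μ, ∀ (i : Fin n) (s : Finset (Fin n)), i ∉ s →
      Y ω i ≠ minNormPredict (Matrix.of fun k : s => X ω k) (fun k : s => Y ω k) (X ω i) := by
    simp only [ae_all_iff]
    intro i s hi
    have hind : IndepFun (fun ω => (X ω i, Y ω i)) (fun ω (k : s) => (X ω k, Y ω k)) μ :=
      (hindep.indepFun_finset {i} s (Finset.disjoint_singleton_left.2 hi) hV).comp
        (measurable_pi_apply (⟨i, Finset.mem_singleton_self i⟩ : ({i} : Finset (Fin n))))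
        measurable_id
    refine ae_iff.mpr ?_
    simpa using measure_eq_comp_eq_zero_of_indepFun (hX i) (hY i)
      (measurable_pi_lambda _ fun k : s => hV k) hind (hcond i)
      (h := fun q => minNormPredict (Matrix.of fun k => (q.2 k).1) (fun k => (q.2 k).2) q.1)
      (Measurable.minNormPredict (by fun_prop) (by fun_prop) (by fun_prop))
  filter_upwards [hnull] with ω hω η ⟨w, r, hs⟩
  obtain ⟨i, hi⟩ : ∃ i, ¬(-(1 - τ) < η i ∧ η i < τ) := by
    by_contra! hall
    have hfit : Y ω = fun k => X ω k ⬝ᵥ w :=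
      funext fun k => hs.interpolates (Finset.mem_univ k) (hall k)
    obtain ⟨i, s, his, heq⟩ :=
      exists_notMem_dotProduct_eq_minNormPredict (by simpa using hpn) (X ω) w
    exact hω i s his (hfit ▸ heq)
  simpa only [Nat.card_eq_fintype_card, Fintype.card_fin] using
    Fintype.card_subtype_lt (p := fun k => -(1 - τ) < η k ∧ η k < τ) hi

/-- Lemma `interp_set_size_less_p` of the paper.  Under the perturbed-covariate
assumption (i.i.d. data, continuous conditional distribution of `Ỹ_i` given `X̃_i`, ridge-type
regularizer with nonnegative penalties, `X̃_i = Z_i + ξ_i` with `ξ_i` independent of `(Z_i, Ỹ_i)`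
and with independent continuously distributed entries, and `p < n`), with probability one every
dual solution `η̂` satisfies `|{i : −(1−τ) < η̂_i < τ}| < n`. -/
theorem interior_dual_coordinates_lt_n
    {Ω : Type*} [MeasurableSpace Ω] (μ : Measure Ω) [IsProbabilityMeasure μ]
    {n p : ℕ} (τ : ℝ) (hτ : τ ∈ Set.Ioo (0 : ℝ) 1)
    (X Z ξ : Ω → Fin n → Fin p → ℝ) (Y : Ω → Fin n → ℝ)
    (hXmeas : Measurable X) (hYmeas : Measurable Y)
    (hZmeas : Measurable Z) (hξmeas : Measurable ξ)
    (hindep : iIndepFun (fun i ω => (X ω i, Y ω i)) μ)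
    (hident : ∀ i j : Fin n,
      IdentDistrib (fun ω => (X ω i, Y ω i)) (fun ω => (X ω j, Y ω j)) μ μ)
    (hcond : ∀ i : Fin n, ∀ᵐ x ∂(μ.map fun ω => X ω i),
      ∀ y : ℝ, condDistrib (fun ω => Y ω i) (fun ω => X ω i) μ x {y} = 0)
    (lam : Fin p → ℝ) (hlam : ∀ j, 0 ≤ lam j)
    (R : (Fin p → ℝ) → ℝ) (hR : R = fun w => ∑ j, lam j * w j ^ 2)
    (hdecomp : ∀ ω i j, X ω i j = Z ω i j + ξ ω i j)
    (hξindep : ∀ i : Fin n, IndepFun (fun ω => ξ ω i) (fun ω => (Z ω i, Y ω i)) μ)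
    (hξentries : ∀ i : Fin n, iIndepFun (fun j ω => ξ ω i j) μ)
    (hξcont : ∀ (i : Fin n) (j : Fin p) (y : ℝ), μ {ω | ξ ω i j = y} = 0)
    (hpn : p < n)
    (hsaddle : ∀ᵐ ω ∂μ,
      (∃ w r η, IsSaddleS τ (X ω) (Y ω) R Finset.univ w r η) ∧
      ∀ i : Fin n, ∃ w r η, IsSaddleS τ (X ω) (Y ω) R (Finset.univ.erase i) w r η) :
    ∀ᵐ ω ∂μ, ∀ η, IsDualSolS τ (X ω) (Y ω) R Finset.univ η →
      Nat.card {i : Fin n // -(1 - τ) < η i ∧ η i < τ} < n :=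
  interior_dual_coordinates_lt_n_general μ τ X Y hXmeas hYmeas hindep hcond R hpn

end
end

section
/- Fix b > a. Let f_n: [a, b] → ℝ be a sequence of random convex functions converging pointwise in probability to a function f: [a, b] → ℝ. Then inf_{x ∈ [a,b]} f_n(x) converges in probability to inf_{x ∈ [a,b]} f(x). Similarly, if f_n: (a, b] → ℝ is a sequence of random convex functions converging pointwise in probability to f: (a, b] → ℝ, then inf_{x ∈ (a,b]} f_n(x) converges in probability to inf_{x ∈ (a,b]} f(x). -/
/-!
For convex `f` and `q` between `x` and `r`, no farther from `x` than from `r`, convexity gives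
`f q ≤ f x + max 0 (f r - f q)`. The limit `g` is convex (a pointwise limit in probability of
convex functions), so its slopes are bounded above away from `b` and below away from `a`; a fine
uniform grid therefore offers, for every `x`, such a pair `q, r` pointing towards the middle of the
interval along which `g` rises by at most `η`. Consequently any convex `f` uniformly close to `g`
on finitely many grid points has its infimum close to that of `g`, and the probability that
`f_m` is far from `g` at one of finitely many points tends to zero.
-/

open MeasureTheory Filter Set
open scoped Pointwise Topology

theorem ConvexOn.comp_neg {𝕜 E β : Type*} [Semiring 𝕜] [PartialOrder 𝕜] [AddCommGroup E]
    [AddCommMonoid β] [PartialOrder β] [Module 𝕜 E] [SMul 𝕜 β] {s : Set E} {f : E → β}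
    (hf : ConvexOn 𝕜 s f) : ConvexOn 𝕜 (-s) fun x => f (-x) :=
  hf.comp_linearMap (-LinearMap.id)

section Slope

variable {𝕜 : Type*} [Field 𝕜] [LinearOrder 𝕜] [IsStrictOrderedRing 𝕜] {s : Set 𝕜} {f : 𝕜 → 𝕜}

theorem ConvexOn.slope_le_slope_of_le {x y z w : 𝕜} (hf : ConvexOn 𝕜 s f) (hx : x ∈ s)
    (hy : y ∈ s) (hz : z ∈ s) (hw : w ∈ s) (hxy : x < y) (hyz : y ≤ z) (hzw : z < w) :
    slope f x y ≤ slope f z w := by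
  calc slope f x y ≤ slope f x w :=
        hf.slope_mono hx ⟨hy, hxy.ne'⟩ ⟨hw, (hxy.trans_le hyz |>.trans hzw).ne'⟩ (hyz.trans hzw.le)
    _ = slope f w x := slope_comm f x w
    _ ≤ slope f w z :=
        hf.slope_mono hw ⟨hx, (hxy.trans_le hyz |>.trans hzw).ne⟩ ⟨hz, hzw.ne⟩ (hxy.le.trans hyz)
    _ = slope f z w := slope_comm f w z

theorem ConvexOn.le_add_max_sub_of_le_of_lt {x q r : 𝕜} (hf : ConvexOn 𝕜 s f) (hx : x ∈ s)
    (hr : r ∈ s) (hxq : x ≤ q) (hqr : q < r) (h : q - x ≤ r - q) :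
    f q ≤ f x + max 0 (f r - f q) := by
  rcases hxq.eq_or_lt with rfl | hxq
  · exact le_add_of_nonneg_right (le_max_left _ _)
  have hsec := hf.secant_mono_aux1 hx hr hxq hqr
  rcases le_total (f r - f q) 0 with hle | hle
  · rw [max_eq_left hle]; nlinarith
  · rw [max_eq_right hle]; nlinarith

theorem ConvexOn.le_add_max_sub_of_lt_of_le {x q r : 𝕜} (hf : ConvexOn 𝕜 s f) (hx : x ∈ s)
    (hr : r ∈ s) (hrq : r < q) (hqx : q ≤ x) (h : x - q ≤ q - r) :
    f q ≤ f x + max 0 (f r - f q) := by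
  simpa using hf.comp_neg.le_add_max_sub_of_le_of_lt (x := -x) (q := -q) (r := -r)
    (by simpa using hx) (by simpa using hr) (neg_le_neg hqx) (neg_lt_neg hrq) (by linarith)

end Slope

/-- By `ConvexOn.le_add_max_sub_of_le_of_lt`, the pair `q, r` bounds every convex `f` at `x` from
below in terms of its values on `S`. -/
def IsInfNet (I : Set ℝ) (g : ℝ → ℝ) (η : ℝ) (S : Set ℝ) : Prop :=
  ∀ x ∈ I, ∃ q ∈ S, ∃ r ∈ S, g r ≤ g q + η ∧
    (x ≤ q ∧ q < r ∧ q - x ≤ r - q ∨ r < q ∧ q ≤ x ∧ x - q ≤ q - r)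

namespace IsInfNet

variable {I J S T : Set ℝ} {f g : ℝ → ℝ} {η δ : ℝ}

theorem mono (h : IsInfNet I g η S) (hJI : J ⊆ I) : IsInfNet J g η S :=
  fun x hx => h x (hJI hx)

theorem union (hS : IsInfNet I g η S) (hT : IsInfNet J g η T) : IsInfNet (I ∪ J) g η (S ∪ T) := by
  rintro x (hx | hx)
  · obtain ⟨q, hq, r, hr, h⟩ := hS x hx
    exact ⟨q, .inl hq, r, .inl hr, h⟩
  · obtain ⟨q, hq, r, hr, h⟩ := hT x hx
    exact ⟨q, .inr hq, r, .inr hr, h⟩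

theorem neg (h : IsInfNet I g η S) : IsInfNet (-I) (fun x => g (-x)) η (-S) := by
  intro x hx
  obtain ⟨q, hq, r, hr, hgr, hpos⟩ := h (-x) hx
  refine ⟨-q, by simpa using hq, -r, by simpa using hr, by simpa using hgr, ?_⟩
  rcases hpos with ⟨h₁, h₂, h₃⟩ | ⟨h₁, h₂, h₃⟩
  · exact .inr ⟨by linarith, by linarith, by linarith⟩
  · exact .inl ⟨by linarith, by linarith, by linarith⟩

theorem exists_sub_le (hS : IsInfNet I g η S) (hSI : S ⊆ I) (hη : 0 ≤ η)
    (hf : ConvexOn ℝ I f) (hfg : ∀ q ∈ S, |f q - g q| ≤ δ) {x : ℝ} (hx : x ∈ I) :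
    ∃ q ∈ S, g q - (η + 3 * δ) ≤ f x := by
  obtain ⟨q, hq, r, hr, hgr, hpos⟩ := hS x hx
  have hthree : f q ≤ f x + max 0 (f r - f q) := by
    rcases hpos with ⟨h₁, h₂, h₃⟩ | ⟨h₁, h₂, h₃⟩
    · exact hf.le_add_max_sub_of_le_of_lt hx (hSI hr) h₁ h₂ h₃
    · exact hf.le_add_max_sub_of_lt_of_le hx (hSI hr) h₁ h₂ h₃
  have hq' := abs_le.1 (hfg q hq)
  have hr' := abs_le.1 (hfg r hr)
  have hmax : max 0 (f r - f q) ≤ η + 2 * δ := max_le (by linarith) (by linarith)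
  exact ⟨q, hq, by linarith⟩

theorem bddBelow (hS : IsInfNet I g η S) (hSfin : S.Finite) (hSI : S ⊆ I) (hη : 0 ≤ η)
    (hg : ConvexOn ℝ I g) : BddBelow (g '' I) := by
  obtain ⟨B, hB⟩ := (hSfin.image g).bddBelow
  refine ⟨B - η, forall_mem_image.2 fun x hx => ?_⟩
  obtain ⟨q, hq, hgq⟩ := hS.exists_sub_le hSI hη hg (δ := 0) (by simp) hx
  linarith [hB (mem_image_of_mem g hq)]

theorem sInf_image_sub_le (hS : IsInfNet I g η S) (hSI : S ⊆ I) (hη : 0 ≤ η)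
    (hg : BddBelow (g '' I)) (hf : ConvexOn ℝ I f) (hfg : ∀ q ∈ S, |f q - g q| ≤ δ) {x : ℝ}
    (hx : x ∈ I) : sInf (g '' I) - (η + 3 * δ) ≤ f x := by
  obtain ⟨q, hq, hfq⟩ := hS.exists_sub_le hSI hη hf hfg hx
  linarith [csInf_le hg (mem_image_of_mem g (hSI hq))]

end IsInfNet

theorem exists_nat_mul_mem_Ioc {t d : ℝ} (ht : 0 ≤ t) (hd : 0 < d) :
    ∃ k : ℕ, 0 < k ∧ t < k * d ∧ k * d ≤ t + d := by
  refine ⟨⌊t / d⌋₊ + 1, Nat.succ_pos _, ?_, ?_⟩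
  · have := Nat.lt_floor_add_one (t / d)
    rw [div_lt_iff₀ hd] at this
    exact_mod_cast this
  · have := Nat.floor_le (div_nonneg ht hd.le)
    rw [le_div_iff₀ hd] at this
    push_cast
    linarith

theorem ConvexOn.exists_isInfNet_Icc_midpoint {a b η : ℝ} {g : ℝ → ℝ} (hab : a < b)
    (hg : ConvexOn ℝ (Ioo a b) g) (hη : 0 < η) :
    ∃ S : Finset ℝ, ↑S ⊆ Ioo a b ∧ IsInfNet (Icc a ((a + b) / 2)) g η S := by
  obtain ⟨p, hp⟩ : ∃ p, p = a + 3 * (b - a) / 4 := ⟨_, rfl⟩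
  obtain ⟨p', hp'⟩ : ∃ p', p' = a + 7 * (b - a) / 8 := ⟨_, rfl⟩
  -- Slopes of `g` left of `p` are at most `slope g p p'`, so once `d * slope g p p' < η` one
  -- grid step raises `g` by less than `η`; `8 * d ≤ b - a` keeps two steps from the left half
  -- left of `p`.
  obtain ⟨N, hN⟩ := exists_nat_gt (max 8 ((b - a) * slope g p p' / η))
  have hN8 : (8 : ℝ) < N := (le_max_left _ _).trans_lt hN
  obtain ⟨d, hd⟩ : ∃ d, d = (b - a) / N := ⟨_, rfl⟩
  have hd0 : 0 < d := by rw [hd]; exact div_pos (by linarith) (by linarith)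
  have hNd : N * d = b - a := by rw [hd]; field_simp
  have hd8 : 8 * d ≤ b - a := by nlinarith
  have hds : d * slope g p p' < η := by
    rw [hd, div_mul_eq_mul_div, div_lt_iff₀ (by linarith), mul_comm η]
    exact (div_lt_iff₀ hη).1 ((le_max_right _ _).trans_lt hN)
  set S := (Finset.Ioo 0 N).image fun k : ℕ => a + k * d
  have grid : ∀ k : ℕ, 0 < k → a + k * d < b → a + k * d ∈ S := fun k hk hkb =>
    Finset.mem_image_of_mem _ <| Finset.mem_Ioo.2 ⟨hk, by
      exact_mod_cast lt_of_mul_lt_mul_right (by linarith : (k : ℝ) * d < N * d) hd0.le⟩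
  refine ⟨S, ?_, fun x ⟨hax, hxm⟩ => ?_⟩
  · simp only [S, Finset.coe_image, Finset.coe_Ioo, image_subset_iff]
    rintro k ⟨hk0, hkN⟩
    have hk0' : (0 : ℝ) < k := by exact_mod_cast hk0
    have hkN' : (k : ℝ) < N := by exact_mod_cast hkN
    exact ⟨by nlinarith, by nlinarith⟩
  obtain ⟨k, hk, hqx, hqd⟩ := exists_nat_mul_mem_Ioc (sub_nonneg.2 hax) hd0
  have hq : a + k * d ∈ S := grid k hk (by linarith)
  have hr : a + k * d + d ∈ S := by
    convert grid (k + 1) k.succ_pos (by push_cast; linarith) using 1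
    push_cast
    ring
  refine ⟨_, hq, _, hr, ?_, .inl ⟨by linarith, by linarith, by linarith⟩⟩
  have hslope := hg.slope_le_slope_of_le (x := a + k * d) (y := a + k * d + d) (z := p) (w := p')
    ⟨by linarith, by linarith⟩ ⟨by linarith, by linarith⟩ ⟨by linarith, by linarith⟩
    ⟨by linarith, by linarith⟩ (by linarith) (by linarith) (by linarith)
  rw [slope_def_field, add_sub_cancel_left, div_le_iff₀ hd0] at hslope
  linarith

theorem ConvexOn.exists_isInfNet_Icc {a b η : ℝ} {g : ℝ → ℝ} (hab : a < b)
    (hg : ConvexOn ℝ (Ioo a b) g) (hη : 0 < η) :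
    ∃ S : Finset ℝ, ↑S ⊆ Ioo a b ∧ IsInfNet (Icc a b) g η S := by
  obtain ⟨S, hSab, hS⟩ := hg.exists_isInfNet_Icc_midpoint hab hη
  obtain ⟨T, hTab, hT⟩ := (neg_Ioo a b ▸ hg.comp_neg).exists_isInfNet_Icc_midpoint
    (neg_lt_neg hab) hη
  refine ⟨S ∪ -T, ?_, ?_⟩
  · rw [Finset.coe_union, Finset.coe_neg]
    exact union_subset hSab (by simpa using neg_subset_neg.2 hTab)
  · have hT' : IsInfNet (Icc ((a + b) / 2) b) g η (-T) := by
      have hm : (-b + -a) / 2 = -((a + b) / 2) := by ring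
      simpa [hm] using hT.neg
    rw [← Icc_union_Icc_eq_Icc (b := (a + b) / 2) (by linarith) (by linarith),
      Finset.coe_union, Finset.coe_neg]
    exact hS.union hT'

theorem ConvexOn.exists_abs_sInf_image_sub_lt {a b ε : ℝ} {I : Set ℝ} {g : ℝ → ℝ} (hab : a < b)
    (hIoo : Ioo a b ⊆ I) (hI : I ⊆ Icc a b) (hg : ConvexOn ℝ I g) (hε : 0 < ε) :
    ∃ S : Finset ℝ, ↑S ⊆ I ∧ ∃ δ > 0, ∀ f : ℝ → ℝ, ConvexOn ℝ I f →
      (∀ x ∈ S, |f x - g x| < δ) → |sInf (f '' I) - sInf (g '' I)| < ε := by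
  obtain ⟨S, hSab, hS⟩ := (hg.subset hIoo (convex_Ioo a b)).exists_isInfNet_Icc hab (half_pos hε)
  replace hS := hS.mono hI
  have hSI : ↑S ⊆ I := hSab.trans hIoo
  have hgb := hS.bddBelow S.finite_toSet hSI (half_pos hε).le hg
  have hne : I.Nonempty := (nonempty_Ioo.2 hab).mono hIoo
  obtain ⟨_, ⟨x₀, hx₀, rfl⟩, hx₀lt⟩ :=
    exists_lt_of_csInf_lt (hne.image g) (lt_add_of_pos_right (sInf (g '' I)) (half_pos hε))
  refine ⟨insert x₀ S, by simpa [insert_subset_iff] using ⟨hx₀, hSI⟩, ε / 8, by positivity,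
    fun f hf hfg => ?_⟩
  have hlow : ∀ x ∈ I, sInf (g '' I) - (ε / 2 + 3 * (ε / 8)) ≤ f x := fun x hx =>
    hS.sInf_image_sub_le hSI (half_pos hε).le hgb hf
      (fun q hq => (hfg q (Finset.mem_insert_of_mem hq)).le) hx
  have hupper : sInf (f '' I) ≤ f x₀ :=
    csInf_le ⟨_, forall_mem_image.2 hlow⟩ (mem_image_of_mem f hx₀)
  have hlower := le_csInf (hne.image f) (forall_mem_image.2 hlow)
  have hx₀f := (abs_lt.1 (hfg x₀ (Finset.mem_insert_self x₀ S))).2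
  rw [abs_lt]
  constructor <;> linarith

section Probability

variable {Ω ι : Type*} [MeasurableSpace Ω] {μ : Measure Ω} {l : Filter ι}
  {f : ι → Ω → ℝ → ℝ} {g : ℝ → ℝ}

theorem tendsto_measure_exists_le_abs_sub {S : Finset ℝ}
    (hfg : ∀ x ∈ S, TendstoInMeasure μ (fun m ω => f m ω x) l fun _ => g x) {δ : ℝ}
    (hδ : 0 < δ) : Tendsto (fun m => μ {ω | ∃ x ∈ S, δ ≤ |f m ω x - g x|}) l (𝓝 0) := by
  have hsum : Tendsto (fun m => ∑ x ∈ S, μ {ω | δ ≤ |f m ω x - g x|}) l (𝓝 0) := by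
    have hx : ∀ x ∈ S, Tendsto (fun m => μ {ω | δ ≤ |f m ω x - g x|}) l (𝓝 0) := fun x hx => by
      simpa using tendstoInMeasure_iff_norm.1 (hfg x hx) δ hδ
    simpa using tendsto_finsetSum S hx
  refine tendsto_of_tendsto_of_tendsto_of_le_of_le tendsto_const_nhds hsum (fun _ => zero_le)
    fun m => ?_
  calc μ {ω | ∃ x ∈ S, δ ≤ |f m ω x - g x|} = μ (⋃ x ∈ S, {ω | δ ≤ |f m ω x - g x|}) := by
        congr 1; ext; simp
    _ ≤ _ := measure_biUnion_finset_le S _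

theorem exists_forall_abs_sub_lt [IsProbabilityMeasure μ] [l.NeBot] {S : Finset ℝ}
    (hfg : ∀ x ∈ S, TendstoInMeasure μ (fun m ω => f m ω x) l fun _ => g x) {δ : ℝ}
    (hδ : 0 < δ) : ∃ m ω, ∀ x ∈ S, |f m ω x - g x| < δ := by
  obtain ⟨m, hm⟩ := ((tendsto_measure_exists_le_abs_sub hfg hδ).eventually
    (gt_mem_nhds zero_lt_one)).exists
  obtain ⟨ω, hω⟩ : ∃ ω, ω ∉ {ω | ∃ x ∈ S, δ ≤ |f m ω x - g x|} := by
    by_contra! h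
    simp_all [eq_univ_of_forall h]
  exact ⟨m, ω, by simpa using hω⟩

theorem convexOn_of_tendstoInMeasure [IsProbabilityMeasure μ] [l.NeBot] {I : Set ℝ}
    (hf : ∀ m ω, ConvexOn ℝ I (f m ω))
    (hfg : ∀ x ∈ I, TendstoInMeasure μ (fun m ω => f m ω x) l fun _ => g x) :
    ConvexOn ℝ I g := by
  obtain ⟨ω₀⟩ := nonempty_of_isProbabilityMeasure μ
  obtain ⟨m₀⟩ := l.nonempty_of_neBot
  refine ⟨(hf m₀ ω₀).1, fun x hx y hy s t hs ht hst => le_of_forall_pos_lt_add fun ε hε => ?_⟩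
  have hz := (hf m₀ ω₀).1 hx hy hs ht hst
  obtain ⟨m, ω, hω⟩ := exists_forall_abs_sub_lt (S := {x, y, s • x + t • y}) (by simpa using
    ⟨hfg x hx, hfg y hy, hfg _ hz⟩) (half_pos hε)
  simp only [Finset.mem_insert, Finset.mem_singleton, forall_eq_or_imp, forall_eq] at hω
  obtain ⟨hωx, hωy, hωz⟩ := hω
  have hconv := (hf m ω).2 hx hy hs ht hst
  simp only [smul_eq_mul] at hconv hωz ⊢
  rw [abs_lt] at hωx hωy hωz
  nlinarith

theorem tendstoInMeasure_sInf_image [IsProbabilityMeasure μ] [l.NeBot] {a b : ℝ} {I : Set ℝ}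
    (hab : a < b) (hIoo : Ioo a b ⊆ I) (hI : I ⊆ Icc a b) (hf : ∀ m ω, ConvexOn ℝ I (f m ω))
    (hfg : ∀ x ∈ I, TendstoInMeasure μ (fun m ω => f m ω x) l fun _ => g x) :
    TendstoInMeasure μ (fun m ω => sInf (f m ω '' I)) l fun _ => sInf (g '' I) := by
  refine tendstoInMeasure_iff_norm.2 fun ε hε => ?_
  obtain ⟨S, hSI, δ, hδ, hS⟩ :=
    (convexOn_of_tendstoInMeasure hf hfg).exists_abs_sInf_image_sub_lt hab hIoo hI hε
  refine tendsto_of_tendsto_of_tendsto_of_le_of_le tendsto_const_nhds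
    (tendsto_measure_exists_le_abs_sub (fun x hx => hfg x (hSI hx)) hδ) (fun _ => zero_le)
    fun m => measure_mono fun ω hω => ?_
  by_contra! hclose
  exact (hS _ (hf m ω) (by simpa using hclose)).not_ge (by simpa using hω)

end Probability

/-- Lemma 10 extension, convergence of infima of random convex functions.
Fix `b > a`.  If `f_m : [a,b] → ℝ` is a sequence of random convex functions converging pointwise
in probability to `f : [a,b] → ℝ`, then `inf_{x ∈ [a,b]} f_m(x)` converges in probability to
`inf_{x ∈ [a,b]} f(x)`; similarly with the half-open interval `(a, b]` in place of `[a, b]`. -/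
theorem inf_of_random_convex_functions_converges
    {Ω : Type*} [MeasurableSpace Ω] (μ : Measure Ω) [IsProbabilityMeasure μ]
    (a b : ℝ) (hab : a < b) :
    (∀ (f : ℕ → Ω → ℝ → ℝ) (g : ℝ → ℝ),
      (∀ m x, Measurable fun ω => f m ω x) →
      (∀ m ω, ConvexOn ℝ (Set.Icc a b) (f m ω)) →
      (∀ x ∈ Set.Icc a b, ∀ ε > (0 : ℝ),
        Tendsto (fun m => μ {ω | ε ≤ |f m ω x - g x|}) atTop (nhds 0)) →
      ∀ ε > (0 : ℝ),
        Tendsto (fun m =>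
            μ {ω | ε ≤ |sInf (f m ω '' Set.Icc a b) - sInf (g '' Set.Icc a b)|})
          atTop (nhds 0)) ∧
    (∀ (f : ℕ → Ω → ℝ → ℝ) (g : ℝ → ℝ),
      (∀ m x, Measurable fun ω => f m ω x) →
      (∀ m ω, ConvexOn ℝ (Set.Ioc a b) (f m ω)) →
      (∀ x ∈ Set.Ioc a b, ∀ ε > (0 : ℝ),
        Tendsto (fun m => μ {ω | ε ≤ |f m ω x - g x|}) atTop (nhds 0)) →
      ∀ ε > (0 : ℝ),
        Tendsto (fun m =>
            μ {ω | ε ≤ |sInf (f m ω '' Set.Ioc a b) - sInf (g '' Set.Ioc a b)|})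
          atTop (nhds 0)) := by
  have key : ∀ {I : Set ℝ}, Ioo a b ⊆ I → I ⊆ Icc a b → ∀ (f : ℕ → Ω → ℝ → ℝ) (g : ℝ → ℝ),
      (∀ m ω, ConvexOn ℝ I (f m ω)) →
      (∀ x ∈ I, ∀ ε > (0 : ℝ), Tendsto (fun m => μ {ω | ε ≤ |f m ω x - g x|}) atTop (𝓝 0)) →
      ∀ ε > (0 : ℝ),
        Tendsto (fun m => μ {ω | ε ≤ |sInf (f m ω '' I) - sInf (g '' I)|}) atTop (𝓝 0) := by
    intro I hIoo hI f g hf hfg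
    simpa [tendstoInMeasure_iff_norm] using tendstoInMeasure_sInf_image hab hIoo hI hf
      fun x hx => tendstoInMeasure_iff_norm.2 (by simpa using hfg x hx)
  exact ⟨fun f g _ => key Ioo_subset_Icc_self subset_rfl f g,
    fun f g _ => key Ioo_subset_Ioc_self Ioc_subset_Icc_self f g⟩
end
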